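/- arXiv:1909.02464 — 9 statements merged into one kernel-verified Lean document; each statement's English description precedes it below -/
import Mathlib

section
/- Let x₁,…,xₙ be pairwise distinct complex numbers, Q(x) = ∏_{i=1}^n (x - x_i), and Λ ∈ ℂ. If 2x·Q'(x) - Q''(x) = Λ·Q(x) for all x ∈ ℂ, then Λ = 2n and for every i = 1,…,n the Bethe equation Σ_{j≠i} 1/(x_i - x_j) = x_i holds. -/
open Polynomial

theorem derivProdXsubC {ι : Type*} [DecidableEq ι] (s : Finset ι) (f : ι → ℂ) :
    derivative (∏ j ∈ s, (X - C (f j))) = ∑ j ∈ s, ∏ k ∈ s.erase j, (X - C (f k)) := by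
  induction s using Finset.induction_on with
  | empty => simp
  | @insert a s ha ih =>
    rw [Finset.prod_insert ha, derivative_mul, derivative_X_sub_C, one_mul, ih,
      Finset.sum_insert ha, Finset.erase_insert ha, Finset.mul_sum]
    congr 1
    apply Finset.sum_congr rfl
    intro j hj
    have haj : j ≠ a := fun h => ha (h ▸ hj)
    rw [Finset.erase_insert_of_ne haj.symm,
      Finset.prod_insert (fun h => ha (Finset.mem_of_mem_erase h))]

/-- The T-Q relation for the harmonic oscillator implies Λ = 2n and the Bethe equations. -/
theorem stmt3 (n : ℕ) (x : Fin n → ℂ) (hinj : Function.Injective x) (Λ : ℂ)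
    (Q : Polynomial ℂ) (hQ : Q = ∏ i, (X - C (x i)))
    (hTQ : ∀ z : ℂ, 2 * z * (derivative Q).eval z - (derivative (derivative Q)).eval z
      = Λ * Q.eval z) :
    Λ = 2 * (n : ℂ) ∧
    ∀ i : Fin n, ∑ j ∈ Finset.univ.erase i, 1 / (x i - x j) = x i := by
  have hpoly : 2 * X * derivative Q - derivative (derivative Q) = C Λ * Q := by
    apply Polynomial.funext
    intro z
    simpa [mul_assoc] using hTQ z
  have hmonic : Q.Monic := by
    rw [hQ]; exact monic_prod_of_monic _ _ fun i _ => monic_X_sub_C _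
  have hdeg : Q.natDegree = n := by
    rw [hQ, natDegree_prod _ _ (fun i _ => X_sub_C_ne_zero _)]
    simp
  constructor
  · rcases Nat.eq_zero_or_pos n with hn | hn
    · subst hn
      have h := hTQ 0
      rw [hQ] at h
      simpa using h.symm
    · obtain ⟨m, rfl⟩ := Nat.exists_eq_succ_of_ne_zero hn.ne'
      have hc := congrArg (fun p => p.coeff (m + 1)) hpoly
      have h2 : (2 : ℂ[X]) = C 2 := (map_ofNat C 2).symm
      simp only [coeff_sub, coeff_C_mul, h2, mul_assoc, coeff_X_mul,
        coeff_derivative] at hc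
      have hn1 : Q.coeff (m + 1) = 1 := by
        have := hmonic.coeff_natDegree
        rwa [hdeg] at this
      have hn3 : Q.coeff (m + 1 + 1 + 1) = 0 :=
        coeff_eq_zero_of_natDegree_lt (by rw [hdeg]; omega)
      rw [hn1, hn3] at hc
      push_cast at hc ⊢
      linear_combination -hc
  · intro i
    set s := Finset.univ.erase i with hs
    set P : ℂ[X] := ∏ j ∈ s, (X - C (x j)) with hP
    have hQfac : Q = (X - C (x i)) * P := by
      rw [hQ, hP, ← Finset.mul_prod_erase _ _ (Finset.mem_univ i)]
    have hd1 : derivative Q = P + (X - C (x i)) * derivative P := by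
      rw [hQfac, derivative_mul]; simp
    have hd2 : (derivative (derivative Q)).eval (x i) = 2 * (derivative P).eval (x i) := by
      rw [hd1]
      simp [derivative_mul]
      ring
    have hPv : P.eval (x i) = ∏ j ∈ s, (x i - x j) := by
      rw [hP]; simp [eval_prod]
    have hPne : P.eval (x i) ≠ 0 := by
      rw [hPv]
      apply Finset.prod_ne_zero_iff.mpr
      intro j hj
      have : j ≠ i := (Finset.mem_erase.mp hj).1
      exact sub_ne_zero.mpr fun h => this (hinj h.symm)
    have hkey : (derivative P).eval (x i) = x i * P.eval (x i) := by
      have h := hTQ (x i)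
      rw [hd2, hd1] at h
      rw [hQfac] at h
      simp at h
      linear_combination (-1/2 : ℂ) * h
    have hdP : (derivative P).eval (x i) = ∑ j ∈ s, ∏ k ∈ s.erase j, (x i - x k) := by
      rw [hP, derivProdXsubC]
      simp [eval_finset_sum, eval_prod]
    have hsum : (∑ j ∈ s, 1 / (x i - x j)) * P.eval (x i) = x i * P.eval (x i) := by
      rw [Finset.sum_mul, ← hkey, hdP]
      apply Finset.sum_congr rfl
      intro j hj
      have hji : j ≠ i := (Finset.mem_erase.mp hj).1
      have hne : x i - x j ≠ 0 := sub_ne_zero.mpr fun h => hji (hinj h.symm)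
      rw [hPv, ← Finset.mul_prod_erase _ _ hj]
      field_simp
    exact mul_right_cancel₀ hPne hsum
end

section
/- Let x₁,…,xₙ be pairwise distinct complex numbers satisfying the Bethe equations Σ_{j≠i} 1/(x_i - x_j) = x_i for every i = 1,…,n, and set Q(x) = ∏_{i=1}^n (x - x_i). Then 2x·Q'(x) - Q''(x) = 2n·Q(x) for all x ∈ ℂ. -/
/-!
Write `Q = (X - xᵢ) R`. Then `Q'(xᵢ) = R(xᵢ)` and `Q''(xᵢ) = 2 R'(xᵢ) = 2 Q'(xᵢ) ∑_{j ≠ i} 1/(xᵢ - xⱼ)`,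
so by the Bethe equations `2XQ' - Q'' - 2nQ` vanishes at the `n` distinct roots. The leading
terms of `2XQ'` and `2nQ` cancel, so this polynomial has degree `< n` and is therefore zero.
-/

open Polynomial Finset Lagrange

section CommRing

variable {R : Type*} [CommRing R]

theorem eval_derivative_derivative_X_sub_C_mul (a : R) (p : R[X]) :
    eval a (derivative (derivative ((X - C a) * p))) = 2 * eval a (derivative p) := by
  simp only [derivative_mul, derivative_add, derivative_sub, derivative_X, derivative_C, sub_zero,
    one_mul, zero_mul, eval_add, eval_mul, eval_sub, eval_X, eval_C, sub_self]
  ring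

theorem coeff_X_mul_derivative (p : R[X]) (m : ℕ) :
    (X * derivative p).coeff m = m * p.coeff m := by
  cases m with
  | zero => simp
  | succ k => rw [coeff_X_mul, coeff_derivative, mul_comm]; push_cast; rfl

theorem degree_two_mul_X_mul_derivative_sub_lt (p : R[X]) :
    (2 * X * derivative p - derivative (derivative p) - 2 * (p.natDegree : R[X]) * p).degree
      < (p.natDegree : WithBot ℕ) := by
  refine (degree_lt_iff_coeff_zero _ _).2 fun m hm => ?_
  have hm : p.natDegree ≤ m := by exact_mod_cast hm
  have hp2 : p.coeff (m + 2) = 0 := coeff_eq_zero_of_natDegree_lt (by omega)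
  rcases hm.eq_or_lt with rfl | hlt
  · simp [mul_assoc, coeff_derivative, coeff_X_mul_derivative, hp2]
  · simp [mul_assoc, coeff_derivative, coeff_X_mul_derivative, hp2,
      coeff_eq_zero_of_natDegree_lt hlt]

end CommRing

section Field

variable {F ι : Type*} [Field F] [DecidableEq ι] {s : Finset ι} {v : ι → F}

theorem eval_derivative_nodal_eq_mul_sum_inv {z : F} (hz : ∀ i ∈ s, z ≠ v i) :
    eval z (derivative (nodal s v)) = eval z (nodal s v) * ∑ i ∈ s, (z - v i)⁻¹ := by
  rw [derivative_nodal, eval_finsetSum, mul_sum]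
  refine sum_congr rfl fun i hi => ?_
  rw [nodal_eq_mul_nodal_erase hi, eval_mul, eval_sub, eval_X, eval_C,
    mul_comm (z - v i), mul_assoc, mul_inv_cancel₀ (sub_ne_zero.2 (hz i hi)), mul_one]

theorem eval_derivative_derivative_nodal_at_node (hvs : Set.InjOn v s) {i : ι} (hi : i ∈ s) :
    eval (v i) (derivative (derivative (nodal s v)))
      = 2 * eval (v i) (derivative (nodal s v)) * ∑ j ∈ s.erase i, (v i - v j)⁻¹ := by
  have hne : ∀ j ∈ s.erase i, v i ≠ v j := fun j hj h =>
    ne_of_mem_erase hj (hvs (mem_of_mem_erase hj) hi h.symm)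
  rw [eval_nodal_derivative_eval_node_eq hi, nodal_eq_mul_nodal_erase hi,
    eval_derivative_derivative_X_sub_C_mul, eval_derivative_nodal_eq_mul_sum_inv hne, mul_assoc]

end Field

/-- Bethe equations imply the homogeneous Baxter T-Q relation with Λ = 2n. -/
theorem stmt4 (n : ℕ) (x : Fin n → ℂ) (hinj : Function.Injective x)
    (hBethe : ∀ i : Fin n, ∑ j ∈ Finset.univ.erase i, 1 / (x i - x j) = x i)
    (Q : Polynomial ℂ) (hQ : Q = ∏ i, (X - C (x i))) :
    ∀ z : ℂ, 2 * z * (derivative Q).eval z - (derivative (derivative Q)).eval z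
      = 2 * (n : ℂ) * Q.eval z := by
  rw [← nodal_eq] at hQ
  have hdeg : Q.natDegree = #(univ : Finset (Fin n)) := hQ ▸ natDegree_nodal
  have hvanish : 2 * X * derivative Q - derivative (derivative Q)
      - 2 * (Q.natDegree : ℂ[X]) * Q = 0 := by
    refine eq_zero_of_degree_lt_of_eval_index_eq_zero univ hinj.injOn
      (hdeg ▸ degree_two_mul_X_mul_derivative_sub_lt Q) fun i hi => ?_
    simp only [one_div] at hBethe
    simp only [hQ, eval_sub, eval_mul, eval_X, eval_ofNat, eval_natCast,
      eval_derivative_derivative_nodal_at_node hinj.injOn hi, eval_nodal_at_node hi, hBethe]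
    ring
  intro z
  simpa [hdeg, sub_eq_zero] using congr_arg (eval z) hvanish
end

section
/- Let 𝒜 be an associative unital ℂ-algebra, q ∈ ℂ with q ≠ 0 and q² ≠ 1, and ρ, ω, η, η* ∈ ℂ with ρ ≠ 0. Let c ∈ ℂ satisfy c²ρ = -1. Suppose A, A* ∈ 𝒜 satisfy the Askey–Wilson relations [A,[A,A*]_q]_{q⁻¹} = ρA* + ωA + η and [A*,[A*,A]_q]_{q⁻¹} = ρA + ωA* + η*. Define Ā* = A* and Ā = c[A,A*]_q + cω/(q-q⁻¹). Then [Ā,[Ā,Ā*]_q]_{q⁻¹} = ρĀ* + ω̄Ā + η̄ and [Ā*,[Ā*,Ā]_q]_{q⁻¹} = ρĀ + ω̄Ā* + η̄*, where ω̄ = c(q-q⁻¹)η*, η̄* = -cρω/(q-q⁻¹), and η̄ = η. -/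
set_option maxHeartbeats 4000000 in
/-- The transformation Ā* = A*, Ā = c[A,A*]_q + cω/(q-q⁻¹) yields a new
Askey–Wilson pair with modified structure constants. -/
theorem stmt5 {A : Type*} [Ring A] [Algebra ℂ A]
    (q ρ ω η ηs c : ℂ) (hq : q ≠ 0) (hq2 : q ^ 2 ≠ 1) (hρ : ρ ≠ 0)
    (hc : c ^ 2 * ρ = -1)
    (Aa As Abar Asbar : A)
    (rel1 : q⁻¹ • (Aa * (q • (Aa * As) - q⁻¹ • (As * Aa)))
        - q • ((q • (Aa * As) - q⁻¹ • (As * Aa)) * Aa)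
        = ρ • As + ω • Aa + algebraMap ℂ A η)
    (rel2 : q⁻¹ • (As * (q • (As * Aa) - q⁻¹ • (Aa * As)))
        - q • ((q • (As * Aa) - q⁻¹ • (Aa * As)) * As)
        = ρ • Aa + ω • As + algebraMap ℂ A ηs)
    (hAsbar : Asbar = As)
    (hAbar : Abar = c • (q • (Aa * As) - q⁻¹ • (As * Aa))
        + algebraMap ℂ A (c * ω / (q - q⁻¹))) :
    (q⁻¹ • (Abar * (q • (Abar * Asbar) - q⁻¹ • (Asbar * Abar)))
        - q • ((q • (Abar * Asbar) - q⁻¹ • (Asbar * Abar)) * Abar)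
        = ρ • Asbar + (c * (q - q⁻¹) * ηs) • Abar + algebraMap ℂ A η) ∧
    (q⁻¹ • (Asbar * (q • (Asbar * Abar) - q⁻¹ • (Abar * Asbar)))
        - q • ((q • (Asbar * Abar) - q⁻¹ • (Abar * Asbar)) * Asbar)
        = ρ • Abar + (c * (q - q⁻¹) * ηs) • Asbar
          + algebraMap ℂ A (-(c * ρ * ω) / (q - q⁻¹))) := by
  subst Asbar
  subst Abar
  have hq21 : q ^ 2 - 1 ≠ 0 := sub_ne_zero.mpr hq2
  have hqq : q - q⁻¹ ≠ 0 := by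
    intro h
    apply hq21
    have h2 : q * (q - q⁻¹) = q ^ 2 - 1 := by
      rw [mul_sub, mul_inv_cancel₀ hq]; ring
    rw [h, mul_zero] at h2
    exact h2.symm
  have hc' : c ^ 2 * ρ + 1 = 0 := by rw [hc]; ring
  set k := c * ω / (q - q⁻¹) with hkdef
  set k2 := -(c * ρ * ω) / (q - q⁻¹) with hk2def
  have hz : k * (q - q⁻¹) - c * ω = 0 := by
    rw [hkdef, div_mul_cancel₀ _ hqq, sub_self]
  have hz2 : k2 * (q - q⁻¹) + c * ρ * ω = 0 := by
    rw [hk2def, div_mul_cancel₀ _ hqq]; ring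
  clear_value k k2
  have hM1 : q⁻¹ • (Aa * (q • (Aa * As) - q⁻¹ • (As * Aa)))
        - q • ((q • (Aa * As) - q⁻¹ • (As * Aa)) * Aa)
        - (ρ • As + ω • Aa + algebraMap ℂ A η) = 0 := sub_eq_zero_of_eq rel1
  have hM2 : q⁻¹ • (As * (q • (As * Aa) - q⁻¹ • (Aa * As)))
        - q • ((q • (As * Aa) - q⁻¹ • (Aa * As)) * As)
        - (ρ • Aa + ω • As + algebraMap ℂ A ηs) = 0 := sub_eq_zero_of_eq rel2
  constructor
  · have key :
        (q⁻¹ • ((c • (q • (Aa * As) - q⁻¹ • (As * Aa)) + algebraMap ℂ A k)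
            * (q • ((c • (q • (Aa * As) - q⁻¹ • (As * Aa)) + algebraMap ℂ A k) * As)
              - q⁻¹ • (As * (c • (q • (Aa * As) - q⁻¹ • (As * Aa)) + algebraMap ℂ A k))))
          - q • ((q • ((c • (q • (Aa * As) - q⁻¹ • (As * Aa)) + algebraMap ℂ A k) * As)
              - q⁻¹ • (As * (c • (q • (Aa * As) - q⁻¹ • (As * Aa)) + algebraMap ℂ A k)))
            * (c • (q • (Aa * As) - q⁻¹ • (As * Aa)) + algebraMap ℂ A k)))
        - (ρ • As + (c * (q - q⁻¹) * ηs) • (c • (q • (Aa * As) - q⁻¹ • (As * Aa)) + algebraMap ℂ A k)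
            + algebraMap ℂ A η)
        = c ^ 2 • ((-ρ) • (q⁻¹ • (Aa * (q • (Aa * As) - q⁻¹ • (As * Aa)))
              - q • ((q • (Aa * As) - q⁻¹ • (As * Aa)) * Aa)
              - (ρ • As + ω • Aa + algebraMap ℂ A η))
            + ω • (q⁻¹ • (As * (q • (As * Aa) - q⁻¹ • (Aa * As)))
              - q • ((q • (As * Aa) - q⁻¹ • (Aa * As)) * As)
              - (ρ • Aa + ω • As + algebraMap ℂ A ηs))
            + q • ((q • (Aa * As) - q⁻¹ • (As * Aa))
              * (q⁻¹ • (As * (q • (As * Aa) - q⁻¹ • (Aa * As)))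
                - q • ((q • (As * Aa) - q⁻¹ • (Aa * As)) * As)
                - (ρ • Aa + ω • As + algebraMap ℂ A ηs)))
            - q⁻¹ • ((q⁻¹ • (As * (q • (As * Aa) - q⁻¹ • (Aa * As)))
                - q • ((q • (As * Aa) - q⁻¹ • (Aa * As)) * As)
                - (ρ • Aa + ω • As + algebraMap ℂ A ηs))
              * (q • (Aa * As) - q⁻¹ • (As * Aa))))
          - (c ^ 2 * ρ + 1) • (ρ • As + algebraMap ℂ A η)
          + (k * (q - q⁻¹) - c * ω) • ((-(c * (q - q⁻¹)))
                • ((q • (Aa * As) - q⁻¹ • (As * Aa)) * As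
                  + As * (q • (Aa * As) - q⁻¹ • (As * Aa)))
              + (-(c * ηs)) • (1 : A)
              + (-(k * (q - q⁻¹) + c * ω)) • As) := by
      simp only [Algebra.algebraMap_eq_smul_one, mul_add, add_mul, mul_sub, sub_mul,
        smul_add, smul_sub, smul_smul, smul_mul_assoc, mul_smul_comm, mul_assoc,
        mul_one, one_mul, neg_smul, smul_neg]
      match_scalars <;> first
        | ring
        | (field_simp; ring)
        | (field_simp; tauto)
        | tauto
    rw [hM1, hM2, hc', hz] at key
    simp only [smul_zero, zero_smul, mul_zero, zero_mul, add_zero, zero_add, sub_zero,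
      sub_self] at key
    exact sub_eq_zero.mp key
  · have key :
        (q - q⁻¹) • ((q⁻¹ • (As * (q • (As * (c • (q • (Aa * As) - q⁻¹ • (As * Aa)) + algebraMap ℂ A k))
              - q⁻¹ • ((c • (q • (Aa * As) - q⁻¹ • (As * Aa)) + algebraMap ℂ A k) * As)))
          - q • ((q • (As * (c • (q • (Aa * As) - q⁻¹ • (As * Aa)) + algebraMap ℂ A k))
              - q⁻¹ • ((c • (q • (Aa * As) - q⁻¹ • (As * Aa)) + algebraMap ℂ A k) * As)) * As))
        - (ρ • (c • (q • (Aa * As) - q⁻¹ • (As * Aa)) + algebraMap ℂ A k)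
            + (c * (q - q⁻¹) * ηs) • As + algebraMap ℂ A k2))
        = (q - q⁻¹) • ((-c) • (q⁻¹ • (As * (q⁻¹ • (As * (q • (As * Aa) - q⁻¹ • (Aa * As)))
              - q • ((q • (As * Aa) - q⁻¹ • (Aa * As)) * As)
              - (ρ • Aa + ω • As + algebraMap ℂ A ηs)))
            - q • ((q⁻¹ • (As * (q • (As * Aa) - q⁻¹ • (Aa * As)))
                - q • ((q • (As * Aa) - q⁻¹ • (Aa * As)) * As)
                - (ρ • Aa + ω • As + algebraMap ℂ A ηs)) * As)))
          + (k * (q - q⁻¹) - c * ω) • ((-((q - q⁻¹) * (q - q⁻¹))) • (As * As) + (-ρ) • (1 : A))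
          + (k2 * (q - q⁻¹) + c * ρ * ω) • (-(1 : A)) := by
      simp only [Algebra.algebraMap_eq_smul_one, mul_add, add_mul, mul_sub, sub_mul,
        smul_add, smul_sub, smul_smul, smul_mul_assoc, mul_smul_comm, mul_assoc,
        mul_one, one_mul, neg_smul, smul_neg]
      match_scalars <;> first
        | ring
        | (field_simp; ring)
        | (field_simp; tauto)
        | tauto
    rw [hM2, hz, hz2] at key
    simp only [smul_zero, zero_smul, mul_zero, zero_mul, add_zero, zero_add, sub_zero,
      sub_self, smul_neg, neg_zero] at key
    rcases smul_eq_zero.mp key with h | h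
    · exact absurd h hqq
    · exact sub_eq_zero.mp h
end

section
/- Let 𝒜 be an associative unital ℂ-algebra, q ∈ ℂ with q ≠ 0 and q² ≠ 1, and ρ, ω, η, η* ∈ ℂ with ρ ≠ 0. Let c ∈ ℂ satisfy c²ρ = -1. Suppose A, A* ∈ 𝒜 satisfy [A,[A,A*]_q]_{q⁻¹} = ρA* + ωA + η and [A*,[A*,A]_q]_{q⁻¹} = ρA + ωA* + η*. Define A⋄ = c[A*,A]_q + cω/(q-q⁻¹). Then [A,[A,A⋄]_q]_{q⁻¹} = ρA⋄ + c(q-q⁻¹)η·A - cρω/(q-q⁻¹), and [A⋄,[A⋄,A]_q]_{q⁻¹} = ρA + c(q-q⁻¹)η·A⋄ + η*. -/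
set_option maxHeartbeats 4000000


/-- The element A⋄ = c[A*,A]_q + cω/(q-q⁻¹) satisfies Askey–Wilson type
relations with A, so (A, A*, A⋄) forms a Leonard-triple-like configuration. -/
theorem stmt6 {A : Type*} [Ring A] [Algebra ℂ A]
    (q ρ ω η ηs c : ℂ) (hq : q ≠ 0) (hq2 : q ^ 2 ≠ 1) (hρ : ρ ≠ 0)
    (hc : c ^ 2 * ρ = -1)
    (Aa As Ad : A)
    (rel1 : q⁻¹ • (Aa * (q • (Aa * As) - q⁻¹ • (As * Aa)))
        - q • ((q • (Aa * As) - q⁻¹ • (As * Aa)) * Aa)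
        = ρ • As + ω • Aa + algebraMap ℂ A η)
    (rel2 : q⁻¹ • (As * (q • (As * Aa) - q⁻¹ • (Aa * As)))
        - q • ((q • (As * Aa) - q⁻¹ • (Aa * As)) * As)
        = ρ • Aa + ω • As + algebraMap ℂ A ηs)
    (hAd : Ad = c • (q • (As * Aa) - q⁻¹ • (Aa * As))
        + algebraMap ℂ A (c * ω / (q - q⁻¹))) :
    (q⁻¹ • (Aa * (q • (Aa * Ad) - q⁻¹ • (Ad * Aa)))
        - q • ((q • (Aa * Ad) - q⁻¹ • (Ad * Aa)) * Aa)
        = ρ • Ad + (c * (q - q⁻¹) * η) • Aa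
          + algebraMap ℂ A (-(c * ρ * ω) / (q - q⁻¹))) ∧
    (q⁻¹ • (Ad * (q • (Ad * Aa) - q⁻¹ • (Aa * Ad)))
        - q • ((q • (Ad * Aa) - q⁻¹ • (Aa * Ad)) * Ad)
        = ρ • Aa + (c * (q - q⁻¹) * η) • Ad + algebraMap ℂ A ηs) := by
  have hc0 : c ≠ 0 := by
    intro h; rw [h] at hc; norm_num at hc
  have hd : q - q⁻¹ ≠ 0 := by
    intro h
    apply hq2
    have h2 := sub_eq_zero.mp h
    field_simp at h2
    linear_combination h2
  have hρ2 : ρ = -1 / c ^ 2 := by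
    field_simp
    linear_combination hc
  have h3 : (-1 + q ^ 2 : ℂ) ≠ 0 := fun h => hq2 (by linear_combination h)
  have hA : (-q + q ^ 3 : ℂ) ≠ 0 := by
    have hf : (-q + q ^ 3 : ℂ) = q * (-1 + q ^ 2) := by ring
    rw [hf]; exact mul_ne_zero hq h3
  have hB : (-q ^ 2 + q ^ 4 : ℂ) ≠ 0 := by
    have hf : (-q ^ 2 + q ^ 4 : ℂ) = q * (-q + q ^ 3) := by ring
    rw [hf]; exact mul_ne_zero hq hA
  have hC : (-q ^ 3 + q ^ 5 : ℂ) ≠ 0 := by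
    have hf : (-q ^ 3 + q ^ 5 : ℂ) = q * (-q ^ 2 + q ^ 4) := by ring
    rw [hf]; exact mul_ne_zero hq hB
  have hD : (1 - q ^ 2 * 2 + q ^ 4 : ℂ) ≠ 0 := by
    have hf : (1 - q ^ 2 * 2 + q ^ 4 : ℂ) = (-1 + q ^ 2) * (-1 + q ^ 2) := by ring
    rw [hf]; exact mul_ne_zero h3 h3
  have hE : (-q ^ 4 + q ^ 6 : ℂ) ≠ 0 := by
    have hf : (-q ^ 4 + q ^ 6 : ℂ) = q * (-q ^ 3 + q ^ 5) := by ring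
    rw [hf]; exact mul_ne_zero hq hC
  have hF : (q ^ 2 - q ^ 4 * 2 + q ^ 6 : ℂ) ≠ 0 := by
    have hf : (q ^ 2 - q ^ 4 * 2 + q ^ 6 : ℂ) = q ^ 2 * ((-1 + q ^ 2) * (-1 + q ^ 2)) := by ring
    rw [hf]; exact mul_ne_zero (pow_ne_zero 2 hq) (mul_ne_zero h3 h3)
  have hG : (q ^ 6 - q ^ 8 * 6 + (q ^ 10 * 15 - q ^ 12 * 20) + (q ^ 14 * 15 - q ^ 16 * 6) + q ^ 18 : ℂ) ≠ 0 := by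
    have hf : (q ^ 6 - q ^ 8 * 6 + (q ^ 10 * 15 - q ^ 12 * 20) + (q ^ 14 * 15 - q ^ 16 * 6) + q ^ 18 : ℂ)
        = q ^ 6 * ((-1 + q ^ 2) ^ 6) := by ring
    rw [hf]; exact mul_ne_zero (pow_ne_zero 6 hq) (pow_ne_zero 6 h3)
  have hc2 : (c : ℂ) ^ 2 ≠ 0 := pow_ne_zero 2 hc0
  have hc4 : (c : ℂ) ^ 4 ≠ 0 := pow_ne_zero 4 hc0
  have e1 : q⁻¹ • (Aa * (q • (Aa * As) - q⁻¹ • (As * Aa)))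
      - q • ((q • (Aa * As) - q⁻¹ • (As * Aa)) * Aa)
      - (ρ • As + ω • Aa + algebraMap ℂ A η) = 0 := sub_eq_zero.mpr rel1
  have e2 : q⁻¹ • (As * (q • (As * Aa) - q⁻¹ • (Aa * As)))
      - q • ((q • (As * Aa) - q⁻¹ • (Aa * As)) * As)
      - (ρ • Aa + ω • As + algebraMap ℂ A ηs) = 0 := sub_eq_zero.mpr rel2
  subst hAd
  constructor
  · rw [← sub_eq_zero]
    calc q⁻¹ • (Aa * (q • (Aa * (c • (q • (As * Aa) - q⁻¹ • (Aa * As))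
              + algebraMap ℂ A (c * ω / (q - q⁻¹))))
            - q⁻¹ • ((c • (q • (As * Aa) - q⁻¹ • (Aa * As))
              + algebraMap ℂ A (c * ω / (q - q⁻¹))) * Aa)))
          - q • ((q • (Aa * (c • (q • (As * Aa) - q⁻¹ • (Aa * As))
              + algebraMap ℂ A (c * ω / (q - q⁻¹))))
            - q⁻¹ • ((c • (q • (As * Aa) - q⁻¹ • (Aa * As))
              + algebraMap ℂ A (c * ω / (q - q⁻¹))) * Aa)) * Aa)
          - (ρ • (c • (q • (As * Aa) - q⁻¹ • (Aa * As))
              + algebraMap ℂ A (c * ω / (q - q⁻¹)))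
            + (c * (q - q⁻¹) * η) • Aa
            + algebraMap ℂ A (-(c * ρ * ω) / (q - q⁻¹)))
        = (-c) • (q⁻¹ • (Aa * (q⁻¹ • (Aa * (q • (Aa * As) - q⁻¹ • (As * Aa)))
              - q • ((q • (Aa * As) - q⁻¹ • (As * Aa)) * Aa)
              - (ρ • As + ω • Aa + algebraMap ℂ A η)))
            - q • ((q⁻¹ • (Aa * (q • (Aa * As) - q⁻¹ • (As * Aa)))
              - q • ((q • (Aa * As) - q⁻¹ • (As * Aa)) * Aa)
              - (ρ • As + ω • Aa + algebraMap ℂ A η)) * Aa)) := by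
          simp only [Algebra.algebraMap_eq_smul_one, mul_add, add_mul, mul_sub, sub_mul,
            smul_mul_assoc, mul_smul_comm, smul_smul, smul_add, smul_sub,
            one_mul, mul_one, mul_assoc]
          match_scalars <;> (try simp only [hρ2]) <;> (try field_simp) <;> (try ring) <;>
            (try field_simp) <;> (try ring) <;>
            (try linear_combination (-(c ^ 2 * ω) * (1 - q ^ 2) ^ 2) * mul_inv_cancel₀ hG) <;> (try tauto)
      _ = 0 := by rw [e1]; simp
  · rw [← sub_eq_zero]
    calc q⁻¹ • ((c • (q • (As * Aa) - q⁻¹ • (Aa * As))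
              + algebraMap ℂ A (c * ω / (q - q⁻¹)))
            * (q • ((c • (q • (As * Aa) - q⁻¹ • (Aa * As))
                + algebraMap ℂ A (c * ω / (q - q⁻¹))) * Aa)
              - q⁻¹ • (Aa * (c • (q • (As * Aa) - q⁻¹ • (Aa * As))
                + algebraMap ℂ A (c * ω / (q - q⁻¹))))))
          - q • ((q • ((c • (q • (As * Aa) - q⁻¹ • (Aa * As))
                + algebraMap ℂ A (c * ω / (q - q⁻¹))) * Aa)
              - q⁻¹ • (Aa * (c • (q • (As * Aa) - q⁻¹ • (Aa * As))
                + algebraMap ℂ A (c * ω / (q - q⁻¹)))))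
            * (c • (q • (As * Aa) - q⁻¹ • (Aa * As))
              + algebraMap ℂ A (c * ω / (q - q⁻¹))))
          - (ρ • Aa + (c * (q - q⁻¹) * η) • (c • (q • (As * Aa) - q⁻¹ • (Aa * As))
              + algebraMap ℂ A (c * ω / (q - q⁻¹)))
            + algebraMap ℂ A ηs)
        = (c ^ 2) • (q • ((q • (As * Aa) - q⁻¹ • (Aa * As))
              * (q⁻¹ • (Aa * (q • (Aa * As) - q⁻¹ • (As * Aa)))
                - q • ((q • (Aa * As) - q⁻¹ • (As * Aa)) * Aa)
                - (ρ • As + ω • Aa + algebraMap ℂ A η)))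
            - q⁻¹ • ((q⁻¹ • (Aa * (q • (Aa * As) - q⁻¹ • (As * Aa)))
                - q • ((q • (Aa * As) - q⁻¹ • (As * Aa)) * Aa)
                - (ρ • As + ω • Aa + algebraMap ℂ A η))
              * (q • (As * Aa) - q⁻¹ • (Aa * As))))
          + (c ^ 2 * ω) • (q⁻¹ • (Aa * (q • (Aa * As) - q⁻¹ • (As * Aa)))
              - q • ((q • (Aa * As) - q⁻¹ • (As * Aa)) * Aa)
              - (ρ • As + ω • Aa + algebraMap ℂ A η))
          - (c ^ 2 * ρ) • (q⁻¹ • (As * (q • (As * Aa) - q⁻¹ • (Aa * As)))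
              - q • ((q • (As * Aa) - q⁻¹ • (Aa * As)) * As)
              - (ρ • Aa + ω • As + algebraMap ℂ A ηs)) := by
          simp only [Algebra.algebraMap_eq_smul_one, mul_add, add_mul, mul_sub, sub_mul,
            smul_mul_assoc, mul_smul_comm, smul_smul, smul_add, smul_sub,
            one_mul, mul_one, mul_assoc]
          match_scalars <;> (try simp only [hρ2]) <;> (try field_simp) <;> (try ring) <;>
            (try field_simp) <;> (try ring) <;>
            (try linear_combination (-(c ^ 2 * ω) * (1 - q ^ 2) ^ 2) * mul_inv_cancel₀ hG) <;> (try tauto)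
      _ = 0 := by rw [e1, e2]; simp
end

section
/- Let 𝒜 be an associative unital ℂ-algebra, q ∈ ℂ with q ≠ 0, q² ≠ 1, and ρ, ω, η, η* ∈ ℂ. Suppose A, A* ∈ 𝒜 satisfy [A,[A,A*]_q]_{q⁻¹} = ρA* + ωA + η and [A*,[A*,A]_q]_{q⁻¹} = ρA + ωA* + η*. Define Γ = (q²-q⁻²)q⁻¹·A A*[A*,A]_q - q⁻²·([A*,A]_q)² + q⁻²ρ·A² + ρq²·(A*)² + ω(AA* + A*A) + η*(1+q⁻²)A + q²η(1+q⁻²)A*. Then [Γ, A] = 0 and [Γ, A*] = 0, i.e. Γ is central in the subalgebra generated by A and A*. -/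
set_option maxHeartbeats 1600000 in
/-- The Casimir element Γ of the Askey–Wilson algebra commutes with A and A*. -/
theorem stmt7 {A : Type*} [Ring A] [Algebra ℂ A]
    (q ρ ω η ηs : ℂ) (hq : q ≠ 0) (hq2 : q ^ 2 ≠ 1)
    (Aa As G : A)
    (rel1 : q⁻¹ • (Aa * (q • (Aa * As) - q⁻¹ • (As * Aa)))
        - q • ((q • (Aa * As) - q⁻¹ • (As * Aa)) * Aa)
        = ρ • As + ω • Aa + algebraMap ℂ A η)
    (rel2 : q⁻¹ • (As * (q • (As * Aa) - q⁻¹ • (Aa * As)))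
        - q • ((q • (As * Aa) - q⁻¹ • (Aa * As)) * As)
        = ρ • Aa + ω • As + algebraMap ℂ A ηs)
    (hG : G = ((q ^ 2 - q⁻¹ ^ 2) * q⁻¹) •
          (Aa * As * (q • (As * Aa) - q⁻¹ • (Aa * As)))
        - (q⁻¹ ^ 2) • ((q • (As * Aa) - q⁻¹ • (Aa * As)) *
          (q • (As * Aa) - q⁻¹ • (Aa * As)))
        + (q⁻¹ ^ 2 * ρ) • (Aa * Aa) + (ρ * q ^ 2) • (As * As)
        + ω • (Aa * As + As * Aa)
        + (ηs * (1 + q⁻¹ ^ 2)) • Aa + (q ^ 2 * η * (1 + q⁻¹ ^ 2)) • As) :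
    G * Aa - Aa * G = 0 ∧ G * As - As * G = 0 := by
  set E1 : A := Aa * (Aa * As) + As * (Aa * Aa)
      - (q ^ 2 + q⁻¹ ^ 2) • (Aa * (As * Aa)) - ρ • As - ω • Aa - η • (1 : A) with hE1
  set E2 : A := As * (As * Aa) + Aa * (As * As)
      - (q ^ 2 + q⁻¹ ^ 2) • (As * (Aa * As)) - ρ • Aa - ω • As - ηs • (1 : A) with hE2
  have h1 : E1 = 0 := by
    have h := sub_eq_zero_of_eq rel1
    calc E1 = q⁻¹ • (Aa * (q • (Aa * As) - q⁻¹ • (As * Aa)))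
        - q • ((q • (Aa * As) - q⁻¹ • (As * Aa)) * Aa)
        - (ρ • As + ω • Aa + algebraMap ℂ A η) := by
          rw [hE1]
          simp only [Algebra.algebraMap_eq_smul_one, smul_sub, smul_add, smul_smul,
            sub_mul, mul_sub, add_mul, mul_add, smul_mul_assoc, mul_smul_comm, mul_assoc]
          match_scalars <;> (try (field_simp; try ring)) <;> (simp only [← one_div]; field_simp; try ring)
      _ = 0 := h
  have h2 : E2 = 0 := by
    have h := sub_eq_zero_of_eq rel2
    calc E2 = q⁻¹ • (As * (q • (As * Aa) - q⁻¹ • (Aa * As)))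
        - q • ((q • (As * Aa) - q⁻¹ • (Aa * As)) * As)
        - (ρ • Aa + ω • As + algebraMap ℂ A ηs) := by
          rw [hE2]
          simp only [Algebra.algebraMap_eq_smul_one, smul_sub, smul_add, smul_smul,
            sub_mul, mul_sub, add_mul, mul_add, smul_mul_assoc, mul_smul_comm, mul_assoc]
          match_scalars <;> (try (field_simp; try ring)) <;> (simp only [← one_div]; field_simp; try ring)
      _ = 0 := h
  constructor
  · have key : G * Aa - Aa * G
        = (q ^ 2) • (Aa * (As * E1)) - (q ^ 2) • (E1 * (As * Aa))
          - As * (Aa * E1) + E1 * (Aa * As) := by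
      rw [hG, hE1]
      simp only [Algebra.algebraMap_eq_smul_one, smul_sub, smul_add, smul_smul,
        sub_mul, mul_sub, add_mul, mul_add, smul_mul_assoc, mul_smul_comm, mul_assoc,
        mul_one, one_mul]
      match_scalars <;> (try (field_simp; try ring)) <;> (simp only [← one_div]; field_simp; try ring)
    rw [key, h1]
    simp
  · have key : G * As - As * G
        = - (q⁻¹ ^ 2) • (Aa * (E2 * As)) + (q⁻¹ ^ 2) • (E1 * (As * As))
          + (q⁻¹ ^ 2) • (As * (Aa * E2)) - (q⁻¹ ^ 2) • (As * (E1 * As))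
          + E2 * (As * Aa) - Aa * (As * E2) := by
      rw [hG, hE1, hE2]
      simp only [Algebra.algebraMap_eq_smul_one, smul_sub, smul_add, smul_smul, neg_smul,
        sub_mul, mul_sub, add_mul, mul_add, smul_mul_assoc, mul_smul_comm, mul_assoc,
        mul_one, one_mul]
      match_scalars <;> (try (field_simp; try ring)) <;> (simp only [← one_div]; field_simp; try ring)
    rw [key, h1, h2]
    simp
end

section
/- Let q, u, u₁, …, u_M be nonzero complex numbers with q⁴ ≠ 1, let U = (qu²+q⁻¹u⁻²)/(q+q⁻¹), U⁺ = (q³u²+q⁻³u⁻²)/(q+q⁻¹), U_j = (qu_j²+q⁻¹u_j⁻²)/(q+q⁻¹), and Q(X) = ∏_{j=1}^M (X - U_j). Assume U ≠ U_j for all j. Then ∏_{j=1}^M [ b(q²uu_j)·b(qu/u_j) / (b(quu_j)·b(u/u_j)) ] = Q(U⁺)/Q(U), where b(x) = x - x⁻¹. -/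
noncomputable def bb (x : ℂ) : ℂ := x - x⁻¹

/-- The product of the coefficients h(u, u_j) equals Q(U⁺)/Q(U) for the Baxter
Q-polynomial Q(X) = ∏ (X - U_j). -/
theorem stmt10 (q : ℂ) (M : ℕ) (u0 : ℂ) (u : Fin M → ℂ)
    (hq : q ≠ 0) (hq4 : q ^ 4 ≠ 1) (hu0 : u0 ≠ 0) (hu : ∀ j, u j ≠ 0)
    (hne : ∀ j, (q * u0 ^ 2 + q⁻¹ * (u0 ^ 2)⁻¹) / (q + q⁻¹)
      ≠ (q * (u j) ^ 2 + q⁻¹ * ((u j) ^ 2)⁻¹) / (q + q⁻¹)) :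
    ∏ j, (bb (q ^ 2 * u0 * u j) * bb (q * u0 / u j))
        / (bb (q * u0 * u j) * bb (u0 / u j))
      = (∏ j, ((q ^ 3 * u0 ^ 2 + (q ^ 3)⁻¹ * (u0 ^ 2)⁻¹) / (q + q⁻¹)
            - (q * (u j) ^ 2 + q⁻¹ * ((u j) ^ 2)⁻¹) / (q + q⁻¹)))
        / (∏ j, ((q * u0 ^ 2 + q⁻¹ * (u0 ^ 2)⁻¹) / (q + q⁻¹)
            - (q * (u j) ^ 2 + q⁻¹ * ((u j) ^ 2)⁻¹) / (q + q⁻¹))) := by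
  have hq2 : q ^ 2 ≠ 0 := pow_ne_zero 2 hq
  have hqq : q + q⁻¹ ≠ 0 := by
    intro h
    apply hq4
    have h2 : q ^ 2 = -1 := by
      field_simp at h
      linear_combination h
    calc q ^ 4 = (q ^ 2) ^ 2 := by ring
    _ = 1 := by rw [h2]; ring
  have key : ∀ j, (bb (q ^ 2 * u0 * u j) * bb (q * u0 / u j))
        / (bb (q * u0 * u j) * bb (u0 / u j))
      = ((q ^ 3 * u0 ^ 2 + (q ^ 3)⁻¹ * (u0 ^ 2)⁻¹) / (q + q⁻¹)
            - (q * (u j) ^ 2 + q⁻¹ * ((u j) ^ 2)⁻¹) / (q + q⁻¹))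
        / ((q * u0 ^ 2 + q⁻¹ * (u0 ^ 2)⁻¹) / (q + q⁻¹)
            - (q * (u j) ^ 2 + q⁻¹ * ((u j) ^ 2)⁻¹) / (q + q⁻¹)) := by
    intro j
    have huj : u j ≠ 0 := hu j
    have hden : bb (q * u0 * u j) * bb (u0 / u j)
        = (q * u0 ^ 2 + q⁻¹ * (u0 ^ 2)⁻¹)
            - (q * (u j) ^ 2 + q⁻¹ * ((u j) ^ 2)⁻¹) := by
      unfold bb
      field_simp
      ring
    have hnum : bb (q ^ 2 * u0 * u j) * bb (q * u0 / u j)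
        = (q ^ 3 * u0 ^ 2 + (q ^ 3)⁻¹ * (u0 ^ 2)⁻¹)
            - (q * (u j) ^ 2 + q⁻¹ * ((u j) ^ 2)⁻¹) := by
      unfold bb
      field_simp
      ring
    rw [hnum, hden, div_sub_div_same, div_sub_div_same,
      div_div_div_cancel_right₀ hqq]
  rw [Finset.prod_congr rfl (fun j _ => key j), Finset.prod_div_distrib]
end

section
/- For all integers n ≥ 1 and 0 ≤ k ≤ n: Σ_{m=0}^{n-k-1} ((2n-2m)/(n-m-k))·C(2n, m)·C(n-m-1+k, n-m-1-k) + C(2n, n-k) = 4^{n-k}·C(n, k), where C(·,·) denotes the binomial coefficient and the sum is empty when k = n. -/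
/-!
With `d = n - k`, the `m`-th summand is `C(2n, m)` times the coefficient of `x^(d-m)` in
`(1 + x) / (1 - x)^(2k+1)`, so the left-hand side is `[x^d] (1 + x)^(2n+1) / (1 - x)^(2k+1)`.
Splitting `(1 + x)^2 = 4x + (1 - x)^2` shows that these coefficients satisfy the same
recurrence as `4^d C(d+k, k)`, namely Pascal's rule weighted by `4`, and the boundary values
agree: `Σ_{i ≤ d} C(2d+1, i) = 4^d` for `k = 0`, and `1` for `d = 0`.
-/

open Finset PowerSeries

namespace PowerSeries

section CommRing

variable {R : Type*} [CommRing R]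

theorem coeff_one_add_X_pow (N i : ℕ) : coeff i ((1 + X : R⟦X⟧) ^ N) = N.choose i := by
  have : (1 + X : R⟦X⟧) ^ N = ((1 + Polynomial.X) ^ N : Polynomial R) := by simp
  rw [this, Polynomial.coeff_coe, Polynomial.coeff_one_add_X_pow]

theorem coeff_invOneSubPow_succ (r j : ℕ) :
    coeff j (invOneSubPow R (r + 1) : R⟦X⟧) = (j + r).choose r := by
  rw [invOneSubPow_val_succ_eq_mk_add_choose, coeff_mk, add_comm]

theorem coeff_mul_eq_sum_range (f g : R⟦X⟧) (d : ℕ) :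
    coeff d (f * g) = ∑ m ∈ range (d + 1), coeff m f * coeff (d - m) g := by
  rw [coeff_mul, Nat.sum_antidiagonal_eq_sum_range_succ (fun i j => coeff i f * coeff j g)]

end CommRing

theorem coeff_succ_one_add_X_mul_invOneSubPow_succ {K : Type*} [Field K] [CharZero K]
    (c r : ℕ) :
    coeff (c + 1) ((1 + X) * (invOneSubPow K (r + 1) : K⟦X⟧)) =
      (2 * c + 2 + r) / (c + 1) * ((c + r).choose c : K) := by
  have h : ((c + r).choose r : K) * (c + r + 1) = (c + r + 1).choose r * (c + 1) := by
    exact_mod_cast show (c + r).choose r * (c + r + 1) = (c + r + 1).choose r * (c + 1) by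
      rw [Nat.choose_mul_succ_eq, show c + r + 1 - r = c + 1 by omega]
  rw [add_mul, one_mul, map_add, coeff_succ_X_mul, coeff_invOneSubPow_succ,
    coeff_invOneSubPow_succ, Nat.choose_symm_add, show c + 1 + r = c + r + 1 by ring]
  field_simp
  linear_combination -h

end PowerSeries

variable (R : Type*) [CommRing R]

noncomputable def binomQuotCoeff (d k : ℕ) : R :=
  coeff d ((1 + X : R⟦X⟧) ^ (2 * (d + k) + 1) * (invOneSubPow R (2 * k + 1) : R⟦X⟧))

variable {R}

theorem binomQuotCoeff_zero_right (d : ℕ) : binomQuotCoeff R d 0 = 4 ^ d := by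
  rw [binomQuotCoeff, coeff_mul_eq_sum_range]
  simp only [coeff_one_add_X_pow, coeff_invOneSubPow_succ, Nat.choose_zero_right,
    Nat.cast_one, mul_one, add_zero, mul_zero]
  rw [← Nat.cast_sum, Nat.sum_range_choose_halfway]
  push_cast
  ring

theorem binomQuotCoeff_zero_left (k : ℕ) : binomQuotCoeff R 0 k = 1 := by
  simp [binomQuotCoeff, coeff_mul_eq_sum_range, coeff_one_add_X_pow, coeff_invOneSubPow_succ]

theorem binomQuotCoeff_succ_succ (d k : ℕ) :
    binomQuotCoeff R (d + 1) (k + 1) =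
      4 * binomQuotCoeff R d (k + 1) + binomQuotCoeff R (d + 1) k := by
  have hinv := one_sub_pow_mul_invOneSubPow_val_add_eq_invOneSubPow_val R (2 * k + 1) 2
  have hsplit : (1 + X : R⟦X⟧) ^ (2 * (d + 1 + (k + 1)) + 1) *
        (invOneSubPow R (2 * (k + 1) + 1) : R⟦X⟧) =
      4 • (X * ((1 + X) ^ (2 * (d + (k + 1)) + 1) *
          (invOneSubPow R (2 * (k + 1) + 1) : R⟦X⟧)))
        + (1 + X) ^ (2 * (d + 1 + k) + 1) * (invOneSubPow R (2 * k + 1) : R⟦X⟧) := by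
    rw [show 2 * (k + 1) + 1 = 2 * k + 1 + 2 by ring]
    linear_combination (1 + X : R⟦X⟧) ^ (2 * (d + 1 + k) + 1) * hinv
  rw [binomQuotCoeff, hsplit, map_add, map_nsmul, coeff_succ_X_mul, nsmul_eq_mul, Nat.cast_ofNat]
  rfl

theorem binomQuotCoeff_eq (d k : ℕ) : binomQuotCoeff R d k = 4 ^ d * (d + k).choose k := by
  induction k generalizing d with
  | zero => simp [binomQuotCoeff_zero_right]
  | succ k ihk =>
    induction d with
    | zero => simp [binomQuotCoeff_zero_left]
    | succ d ihd =>
      rw [binomQuotCoeff_succ_succ, ihd, ihk, show d + 1 + (k + 1) = d + 1 + k + 1 by ring,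
        Nat.choose_succ_succ, show d + 1 + k = d + (k + 1) by ring]
      push_cast
      ring

theorem stmt14_general (n k : ℕ) (hk : k ≤ n) :
    (∑ m ∈ Finset.range (n - k),
        ((2 * (n : ℚ) - 2 * m) / ((n : ℚ) - m - k)) * (Nat.choose (2 * n) m : ℚ)
          * (Nat.choose (n - m - 1 + k) (n - m - 1 - k) : ℚ))
      + (Nat.choose (2 * n) (n - k) : ℚ)
      = 4 ^ (n - k) * (Nat.choose n k : ℚ) := by
  obtain ⟨d, rfl⟩ := Nat.exists_eq_add_of_le' hk
  have hcoeff := binomQuotCoeff_eq (R := ℚ) d k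
  rw [binomQuotCoeff, pow_succ, mul_assoc, coeff_mul_eq_sum_range, sum_range_succ] at hcoeff
  rw [Nat.add_sub_cancel, ← hcoeff]
  congr 1
  · refine sum_congr rfl fun m hm => ?_
    obtain ⟨c, rfl⟩ := Nat.exists_eq_add_of_lt (mem_range.mp hm)
    rw [coeff_one_add_X_pow, show m + c + 1 - m = c + 1 by omega,
      coeff_succ_one_add_X_mul_invOneSubPow_succ,
      show m + c + 1 + k - m - 1 + k = c + 2 * k by omega,
      show m + c + 1 + k - m - 1 - k = c by omega]
    push_cast
    ring
  · simp [coeff_one_add_X_pow, coeff_mul_eq_sum_range, coeff_invOneSubPow_succ]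

/-- The combinatorial identity encoding the expansion of (z - z⁻¹)^{2n} in
powers of z + z⁻¹. -/
theorem stmt14 (n k : ℕ) (hn : 1 ≤ n) (hk : k ≤ n) :
    (∑ m ∈ Finset.range (n - k),
        ((2 * (n : ℚ) - 2 * m) / ((n : ℚ) - m - k)) * (Nat.choose (2 * n) m : ℚ)
          * (Nat.choose (n - m - 1 + k) (n - m - 1 - k) : ℚ))
      + (Nat.choose (2 * n) (n - k) : ℚ)
      = 4 ^ (n - k) * (Nat.choose n k : ℚ) :=
  stmt14_general n k hk
end

section
/- Let K be a field, let n ≥ 0, let P ∈ K[X] be a monic polynomial of degree n+1, let u₁, …, uₙ ∈ K be pairwise distinct, and let U ∈ K be distinct from all u_i. Then for every T ∈ K: (U - T)·∏_{i=1}^n (u_i - T) - P(U)·∏_{i=1}^n (u_i - T) / ∏_{i=1}^n (U - u_i) + Σ_{i=1}^n [ P(u_i)·(U - T)·∏_{j≠i} (u_j - T) ] / [ (U - u_i)·∏_{j≠i} (u_i - u_j) ] = (-1)^{n+1}·P(T). -/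
/-!
For the `n + 1` nodes `v ∈ {U, u₁, …, uₙ}`, the polynomial `P - ∏ᵥ (X - v)` has degree at most `n`,
so it equals its Lagrange interpolant on these nodes; as the nodal product vanishes there, the values
interpolated are just those of `P`. Evaluating at `T` and absorbing the sign `(-1) ^ (n + 1)`
into each product gives the identity.
-/

open Polynomial Finset

namespace Lagrange

variable {K ι : Type*} [Field K] [DecidableEq ι] {s : Finset ι} {v : ι → K}

theorem eq_nodal_add_interpolate_of_monic (hvs : Set.InjOn v s) {P : K[X]} (hP : P.Monic)
    (hdeg : P.natDegree = #s) : P = nodal s v + interpolate s v fun i => P.eval (v i) := by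
  have hdeg_sub : (P - nodal s v).degree < #s := by
    rw [← hdeg, ← degree_eq_natDegree hP.ne_zero]
    refine degree_sub_lt_left ?_ hP.ne_zero (by rw [hP.leadingCoeff, nodal_monic.leadingCoeff])
    rw [degree_nodal, degree_eq_natDegree hP.ne_zero, hdeg]
  rw [← eq_interpolate_of_eval_eq _ hvs hdeg_sub fun i hi => by
    rw [eval_sub, eval_nodal_at_node hi, sub_zero], add_sub_cancel]

theorem eval_eq_prod_add_sum_of_monic (hvs : Set.InjOn v s) {P : K[X]} (hP : P.Monic)
    (hdeg : P.natDegree = #s) (x : K) :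
    P.eval x = ∏ i ∈ s, (x - v i)
      + ∑ i ∈ s, P.eval (v i) * ∏ j ∈ s.erase i, (x - v j) / (v i - v j) := by
  conv_lhs => rw [eq_nodal_add_interpolate_of_monic hvs hP hdeg]
  simp [eval_nodal, Lagrange.basis, basisDivisor, eval_prod, eval_finsetSum, div_eq_inv_mul]

end Lagrange

namespace Finset

variable {α M : Type*} [Fintype α] [DecidableEq α] [CommMonoid M]

theorem prod_univ_erase_none (f : Option α → M) :
    ∏ o ∈ univ.erase none, f o = ∏ a, f (some a) := by
  rw [show univ.erase none = univ.map Function.Embedding.some by ext (_ | a) <;> simp, prod_map]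
  rfl

theorem prod_univ_erase_some (f : Option α → M) (a : α) :
    ∏ o ∈ univ.erase (some a), f o = f none * ∏ b ∈ univ.erase a, f (some b) := by
  rw [show univ.erase (some a) = insert none ((univ.erase a).map Function.Embedding.some) by
    ext (_ | b) <;> simp, prod_insert (by simp), prod_map]
  rfl

theorem prod_sub_comm {ι R : Type*} [CommRing R] (s : Finset ι) (a b : ι → R) :
    ∏ i ∈ s, (a i - b i) = (-1) ^ #s * ∏ i ∈ s, (b i - a i) := by
  rw [← prod_neg]
  simp

end Finset

/-- The Lagrange-interpolation identity underlying the diagonal off-shell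
relation of the modified algebraic Bethe ansatz. -/
theorem stmt15 {K : Type*} [Field K] (n : ℕ) (P : Polynomial K)
    (hP : P.Monic) (hdeg : P.natDegree = n + 1)
    (u : Fin n → K) (hinj : Function.Injective u)
    (U : K) (hU : ∀ i, U ≠ u i) (T : K) :
    (U - T) * ∏ i, (u i - T)
      - P.eval U * (∏ i, (u i - T)) / ∏ i, (U - u i)
      + ∑ i, P.eval (u i) * (U - T) * (∏ j ∈ Finset.univ.erase i, (u j - T))
          / ((U - u i) * ∏ j ∈ Finset.univ.erase i, (u i - u j))
      = (-1) ^ (n + 1) * P.eval T := by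
  have hw : Set.InjOn (Option.elim' U u) (univ : Finset (Option (Fin n))) :=
    (Option.injective_iff (f := Option.elim' U u) |>.2 ⟨hinj, fun ⟨i, hi⟩ => hU i hi.symm⟩).injOn
  have hT := Lagrange.eval_eq_prod_add_sum_of_monic hw hP (by simpa using hdeg) T
  simp only [Fintype.prod_option, Fintype.sum_option, prod_univ_erase_none, prod_univ_erase_some,
    Option.elim'_none, Option.elim'_some] at hT
  have h_nodal : (U - T) * ∏ i, (u i - T) = (-1) ^ (n + 1) * ((T - U) * ∏ i, (T - u i)) := by
    rw [prod_sub_comm, card_univ, Fintype.card_fin]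
    ring
  have h_U : - (P.eval U * (∏ i, (u i - T)) / ∏ i, (U - u i))
      = (-1) ^ (n + 1) * (P.eval U * ∏ i, (T - u i) / (U - u i)) := by
    rw [prod_div_distrib, prod_sub_comm, card_univ, Fintype.card_fin]
    ring
  have h_u : ∀ i, P.eval (u i) * (U - T) * (∏ j ∈ univ.erase i, (u j - T))
          / ((U - u i) * ∏ j ∈ univ.erase i, (u i - u j))
      = (-1) ^ (n + 1) * (P.eval (u i) *
          ((T - U) / (u i - U) * ∏ j ∈ univ.erase i, (T - u j) / (u i - u j))) := by
    intro i
    have hcard : n + 1 = #(univ.erase i) + 2 := by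
      rw [card_erase_of_mem (mem_univ i), card_univ, Fintype.card_fin]
      have := i.pos
      omega
    rw [← div_div, prod_div_distrib, prod_sub_comm (univ.erase i) (fun j => u j), hcard,
      ← neg_div_neg_eq (T - U), neg_sub, neg_sub]
    ring
  rw [hT, mul_add, mul_add, mul_sum, ← h_nodal, ← h_U, ← sum_congr rfl fun i _ => h_u i]
  ring
end

section
/- Let q, a, b, c, d ∈ ℂ with q ∉ {0, 1, -1, i, -i}, and define φ(z) = (1-az)(1-bz)(1-cz)(1-dz) / ((1-z²)(1-q²z²)) for z ∉ {0, ±1, ±q⁻¹}. Then there exists a constant A ∈ ℂ such that for all z with z, z⁻¹ ∉ {±1, ±q⁻¹}: φ(z)·(q²z + q⁻²z⁻¹ - z - z⁻¹) + φ(z⁻¹)·(q⁻²z + q²z⁻¹ - z - z⁻¹) = (q⁻²-1)(1 - abcd)·(z + z⁻¹) + A. -/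
/-
Since `q²w + q⁻²w⁻¹ - w - w⁻¹ = (q⁻² - 1)(1 - q²w²)/w`, the factor `1 - q²w²` in the denominator of
`φ(w)` cancels, and `φ(w)` times its shift coefficient is `(q⁻² - 1) P(w) / (w (1 - w²))` with
`P(w) = (1 - aw)(1 - bw)(1 - cw)(1 - dw)`. The operator applied to `z + z⁻¹` is therefore
`(q⁻² - 1)` times the symmetrisation `g(z) + g(z⁻¹)` of `g(w) = P(w) / (w (1 - w²))`, and
`P(z) - z⁴ P(z⁻¹) = (1 - z²) ((1 - abcd)(1 + z²) - (e₁ - e₃) z)` in the elementary symmetric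
functions `eᵢ` of `a, b, c, d`.
-/

/-- The coefficient function of the Askey–Wilson q-difference operator. -/
noncomputable def phiAW (q a b c d w : ℂ) : ℂ :=
  (1 - a * w) * (1 - b * w) * (1 - c * w) * (1 - d * w)
    / ((1 - w ^ 2) * (1 - q ^ 2 * w ^ 2))

lemma one_sub_sq_ne_zero {K : Type*} [Field K] {x : K} (h1 : x ≠ 1) (h2 : x ≠ -1) :
    1 - x ^ 2 ≠ 0 := by
  rw [sub_ne_zero, ne_comm, sq, Ne, mul_self_eq_one_iff, not_or]
  exact ⟨h1, h2⟩

lemma one_sub_sq_mul_ne_zero {K : Type*} [Field K] {r x : K} (h1 : x ≠ r⁻¹) (h2 : x ≠ -r⁻¹) :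
    1 - r ^ 2 * x ^ 2 ≠ 0 := by
  rw [← mul_pow]
  refine one_sub_sq_ne_zero (fun h ↦ h1 ?_) (fun h ↦ h2 ?_)
  · exact eq_inv_of_mul_eq_one_right h
  · rw [← inv_neg]
    exact eq_inv_of_mul_eq_one_right (by rw [neg_mul, h, neg_neg])

lemma phiAW_mul_shift (q a b c d w : ℂ) (hq : q ≠ 0) (hw : w ≠ 0) (hw1 : 1 - w ^ 2 ≠ 0)
    (hwq : 1 - q ^ 2 * w ^ 2 ≠ 0) :
    phiAW q a b c d w * (q ^ 2 * w + (q ^ 2)⁻¹ * w⁻¹ - w - w⁻¹)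
      = ((q ^ 2)⁻¹ - 1) * ((1 - a * w) * (1 - b * w) * (1 - c * w) * (1 - d * w)
          / (w * (1 - w ^ 2))) := by
  have hcoeff :
      q ^ 2 * w + (q ^ 2)⁻¹ * w⁻¹ - w - w⁻¹ = ((q ^ 2)⁻¹ - 1) * (1 - q ^ 2 * w ^ 2) / w := by
    field_simp
    ring
  have hwq' : 1 - w ^ 2 * q ^ 2 ≠ 0 := by rwa [mul_comm]
  rw [hcoeff, phiAW]
  field_simp

lemma symmetrize_quartic_div {K : Type*} [Field K] (a b c d z : K) (hz : z ≠ 0)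
    (hz1 : 1 - z ^ 2 ≠ 0) :
    (1 - a * z) * (1 - b * z) * (1 - c * z) * (1 - d * z) / (z * (1 - z ^ 2))
      + (1 - a * z⁻¹) * (1 - b * z⁻¹) * (1 - c * z⁻¹) * (1 - d * z⁻¹) / (z⁻¹ * (1 - z⁻¹ ^ 2))
      = (1 - a * b * c * d) * (z + z⁻¹)
          - ((a + b + c + d) - (a * b * c + a * b * d + a * c * d + b * c * d)) := by
  have hz1' : z ^ 2 - 1 ≠ 0 := by rwa [← neg_sub, neg_ne_zero]
  field_simp
  ring

theorem stmt16_general (q a b c d : ℂ) (hq0 : q ≠ 0) :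
    ∃ A : ℂ, ∀ z : ℂ, z ≠ 0 → z ≠ 1 → z ≠ -1 → z ≠ q⁻¹ → z ≠ -q⁻¹ →
      z ≠ q → z ≠ -q →
      phiAW q a b c d z * (q ^ 2 * z + (q ^ 2)⁻¹ * z⁻¹ - z - z⁻¹)
        + phiAW q a b c d z⁻¹ * ((q ^ 2)⁻¹ * z + q ^ 2 * z⁻¹ - z - z⁻¹)
      = ((q ^ 2)⁻¹ - 1) * (1 - a * b * c * d) * (z + z⁻¹) + A := by
  refine ⟨(1 - (q ^ 2)⁻¹) * ((a + b + c + d) - (a * b * c + a * b * d + a * c * d + b * c * d)), ?_⟩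
  intro z hz0 hz1 hzm1 hzq hzmq hzq' hzmq'
  have hinv1 : z⁻¹ ≠ 1 := inv_ne_one.mpr hz1
  have hinvm1 : z⁻¹ ≠ -1 := by rwa [Ne, inv_eq_iff_eq_inv, inv_neg, inv_one]
  have hinvq : z⁻¹ ≠ q⁻¹ := inv_injective.ne hzq'
  have hinvmq : z⁻¹ ≠ -q⁻¹ := by rwa [← inv_neg, inv_injective.ne_iff]
  have hcoeff : (q ^ 2)⁻¹ * z + q ^ 2 * z⁻¹ - z - z⁻¹
      = q ^ 2 * z⁻¹ + (q ^ 2)⁻¹ * z⁻¹⁻¹ - z⁻¹ - z⁻¹⁻¹ := by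
    rw [inv_inv]; ring
  rw [hcoeff, phiAW_mul_shift q a b c d z hq0 hz0 (one_sub_sq_ne_zero hz1 hzm1)
      (one_sub_sq_mul_ne_zero hzq hzmq),
    phiAW_mul_shift q a b c d z⁻¹ hq0 (inv_ne_zero hz0) (one_sub_sq_ne_zero hinv1 hinvm1)
      (one_sub_sq_mul_ne_zero hinvq hinvmq),
    ← mul_add, symmetrize_quartic_div a b c d z hz0 (one_sub_sq_ne_zero hz1 hzm1)]
  ring

/-- The Askey–Wilson operator acts on z + z⁻¹ with eigenvalue
(q⁻²-1)(1-abcd) up to an additive constant. -/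
theorem stmt16 (q a b c d : ℂ) (hq0 : q ≠ 0) (hq1 : q ≠ 1) (hqm1 : q ≠ -1)
    (hqi : q ≠ Complex.I) (hqmi : q ≠ -Complex.I) :
    ∃ A : ℂ, ∀ z : ℂ, z ≠ 0 → z ≠ 1 → z ≠ -1 → z ≠ q⁻¹ → z ≠ -q⁻¹ →
      z ≠ q → z ≠ -q →
      phiAW q a b c d z * (q ^ 2 * z + (q ^ 2)⁻¹ * z⁻¹ - z - z⁻¹)
        + phiAW q a b c d z⁻¹ * ((q ^ 2)⁻¹ * z + q ^ 2 * z⁻¹ - z - z⁻¹)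
      = ((q ^ 2)⁻¹ - 1) * (1 - a * b * c * d) * (z + z⁻¹) + A :=
  stmt16_general q a b c d hq0
end
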